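/- Let $T > 0$, $C \ge 0$, and let $u : [0,T) \to \mathbb{R}$ be differentiable with $u(t) \ge 0$ and $u'(t) \le -\frac{u(t)}{T-t} + C$ for all $t \in [0,T)$. Then $\lim_{t \uparrow T} u(t) = 0$. -/

import Mathlib

/-!
Multiplying the inequality by the integrating factor `1/(T - t)` shows that the Lyapunov function
`F t = u t / (T - t) + C log (T - t)` is nonincreasing. Hence
`0 ≤ u t ≤ (T - t) (F 0 - C log (T - t))`, and the right-hand side tends to `0` as `t ↑ T`
because `x log x → 0` as `x → 0`.
-/

open Filter Real Set Topology

section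

variable {u u' : ℝ → ℝ} {a T C t : ℝ}

lemma hasDerivAt_div_sub_add_mul_log (hu : HasDerivAt u (u' t) t) (ht : t < T) :
    HasDerivAt (fun s ↦ u s / (T - s) + C * log (T - s))
      ((u' t + u t / (T - t) - C) / (T - t)) t := by
  have hpos : T - t ≠ 0 := (sub_pos.2 ht).ne'
  have hsub : HasDerivAt (fun s ↦ T - s) (-1) t := by
    simpa using (hasDerivAt_id t).const_sub T
  refine ((hu.div hsub hpos).add (((hasDerivAt_log hpos).comp t hsub).const_mul C)).congr_deriv ?_
  field_simp
  ring

lemma antitoneOn_div_sub_add_mul_log (hu : ∀ t ∈ Ico a T, HasDerivAt u (u' t) t)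
    (hineq : ∀ t ∈ Ico a T, u' t ≤ -(u t / (T - t)) + C) :
    AntitoneOn (fun s ↦ u s / (T - s) + C * log (T - s)) (Ico a T) := by
  have hF : ∀ t ∈ Ico a T, HasDerivAt (fun s ↦ u s / (T - s) + C * log (T - s))
      ((u' t + u t / (T - t) - C) / (T - t)) t :=
    fun t ht ↦ hasDerivAt_div_sub_add_mul_log (hu t ht) ht.2
  refine antitoneOn_of_hasDerivWithinAt_nonpos (convex_Ico a T)
    (fun t ht ↦ (hF t ht).continuousAt.continuousWithinAt)
    (fun t ht ↦ (hF t (interior_subset ht)).hasDerivWithinAt) fun t ht ↦ ?_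
  have ht' := interior_subset ht
  exact div_nonpos_of_nonpos_of_nonneg (by linarith [hineq t ht']) (sub_pos.2 ht'.2).le

lemma le_sub_mul_sub_mul_log (hu : ∀ t ∈ Ico a T, HasDerivAt u (u' t) t)
    (hineq : ∀ t ∈ Ico a T, u' t ≤ -(u t / (T - t)) + C) (ht : t ∈ Ico a T) :
    u t ≤ (T - t) * (u a / (T - a) + C * log (T - a) - C * log (T - t)) := by
  have hpos : 0 < T - t := sub_pos.2 ht.2
  have hmono :=
    antitoneOn_div_sub_add_mul_log hu hineq (left_mem_Ico.2 (ht.1.trans_lt ht.2)) ht ht.1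
  calc u t = (T - t) * (u t / (T - t)) := by field_simp
    _ ≤ _ := mul_le_mul_of_nonneg_left (by simp only at hmono; linarith) hpos.le

end

lemma tendsto_sub_mul_sub_mul_log_nhdsLT (T K C : ℝ) :
    Tendsto (fun t ↦ (T - t) * (K - C * log (T - t))) (𝓝[<] T) (𝓝 0) := by
  have hg : Tendsto (fun x ↦ K * x - C * (x * log x)) (𝓝 0) (𝓝 0) := by
    have hcont : Continuous fun x ↦ K * x - C * (x * log x) :=
      (continuous_const.mul continuous_id).sub (continuous_const.mul continuous_mul_log)
    simpa using hcont.tendsto 0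
  have hsub : Tendsto (fun t ↦ T - t) (𝓝[<] T) (𝓝 0) := by
    have hcont : Continuous fun t : ℝ ↦ T - t := continuous_const.sub continuous_id
    simpa using (hcont.tendsto T).mono_left nhdsWithin_le_nhds
  convert hg.comp hsub using 2 with t
  simp only [Function.comp_apply]
  ring

theorem stmt_4_general (T C : ℝ) (hT : 0 < T) (u u' : ℝ → ℝ)
    (hu : ∀ t ∈ Set.Ico (0:ℝ) T, HasDerivAt u (u' t) t)
    (hu0 : ∀ t ∈ Set.Ico (0:ℝ) T, 0 ≤ u t)
    (hineq : ∀ t ∈ Set.Ico (0:ℝ) T, u' t ≤ -(u t / (T - t)) + C) :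
    Tendsto u (nhdsWithin T (Set.Iio T)) (nhds 0) := by
  have hnear : ∀ᶠ t in 𝓝[<] T, t ∈ Ico 0 T := by
    filter_upwards [Ioo_mem_nhdsLT_of_mem (right_mem_Ioc.2 hT)] with t ht
    exact Ioo_subset_Ico_self ht
  refine squeeze_zero' (hnear.mono hu0) (hnear.mono fun t ↦ ?_)
    (tendsto_sub_mul_sub_mul_log_nhdsLT T (u 0 / T + C * log T) C)
  simpa only [sub_zero, mul_sub] using le_sub_mul_sub_mul_log hu hineq

/-- If `u ≥ 0` is differentiable on `[0,T)` with `u' t ≤ -u t/(T-t) + C`, then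
`u t → 0` as `t ↑ T`. -/
theorem stmt_4 (T C : ℝ) (hT : 0 < T) (hC : 0 ≤ C) (u u' : ℝ → ℝ)
    (hu : ∀ t ∈ Set.Ico (0:ℝ) T, HasDerivAt u (u' t) t)
    (hu0 : ∀ t ∈ Set.Ico (0:ℝ) T, 0 ≤ u t)
    (hineq : ∀ t ∈ Set.Ico (0:ℝ) T, u' t ≤ -(u t / (T - t)) + C) :
    Tendsto u (nhdsWithin T (Set.Iio T)) (nhds 0) :=
  stmt_4_general T C hT u u' hu hu0 hineq
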